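/- arXiv:2203.03192 — 3 statements merged into one kernel-verified Lean document; each statement's English description precedes it below -/
import Mathlib

section
/- Let 0 < r < 1, a > 0, and T_th ≥ 1 an integer. Suppose B : {0,...,T_th} → ℝ satisfies B(0) = 0, B(t+1) = r·B(t) + a·B(T_th)^{−3/2}·r^{T_th − t} for all 0 ≤ t < T_th, and B(T_th) > 0. Then B(T_th) = (a · r · (1 − r^{2T_th})/(1 − r²))^{2/5}. -/
theorem stmt_5 (r a : ℝ) (hr0 : 0 < r) (hr1 : r < 1) (ha : 0 < a) (Tth : ℕ) (hTth : 1 ≤ Tth)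
    (B : ℕ → ℝ) (hB0 : B 0 = 0) (hBpos : 0 < B Tth)
    (hBrec : ∀ t : ℕ, t < Tth →
      B (t + 1) = r * B t + a * (B Tth) ^ (-(3 : ℝ) / 2) * r ^ (Tth - t)) :
    B Tth = (a * r * (1 - r ^ (2 * Tth)) / (1 - r ^ 2)) ^ ((2 : ℝ) / 5) := by
  set c := a * (B Tth) ^ (-(3 : ℝ) / 2) with hc
  -- closed form for the recurrence
  have key : ∀ t, t ≤ Tth →
      B t = c * (r ^ (Tth - t + 1) * ∑ i ∈ Finset.range t, (r ^ 2) ^ i) := by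
    intro t
    induction t with
    | zero => intro _; simp [hB0]
    | succ n ih =>
      intro h
      have hlt : n < Tth := h
      have hk : Tth - n = Tth - (n + 1) + 1 := by omega
      rw [hBrec n hlt, ih hlt.le, geom_sum_succ]
      rw [hk, pow_succ, pow_succ]
      ring
  have hsum := key Tth le_rfl
  simp only [Nat.sub_self, zero_add, pow_one] at hsum
  have hr2 : (r : ℝ) ^ 2 ≠ 1 := by nlinarith
  rw [geom_sum_eq hr2] at hsum
  have h1 : (1 : ℝ) - r ^ 2 > 0 := by nlinarith
  have h2 : (1 : ℝ) - r ^ (2 * Tth) > 0 := by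
    have : r ^ (2 * Tth) < 1 := pow_lt_one₀ hr0.le hr1 (by omega)
    linarith
  set K : ℝ := r * ((1 - r ^ (2 * Tth)) / (1 - r ^ 2)) with hK
  have hKpos : 0 < K := by positivity
  have heq : ((r ^ 2) ^ Tth - 1) / (r ^ 2 - 1) = (1 - r ^ (2 * Tth)) / (1 - r ^ 2) := by
    rw [pow_mul, div_eq_div_iff (sub_ne_zero.mpr hr2) (ne_of_gt h1)]
    ring
  have hsum' : B Tth = c * K := by rw [hsum, heq, hK]
  set X := B Tth with hX
  -- fixed point equation: X ^ (5/2) = a * K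
  have hXne : X ≠ 0 := ne_of_gt hBpos
  have h32 : X ^ ((3 : ℝ) / 2) > 0 := Real.rpow_pos_of_pos hBpos _
  have hmain : X ^ ((5 : ℝ) / 2) = a * K := by
    have : X * X ^ ((3 : ℝ) / 2) = a * K := by
      have hXeq : X = a * X ^ (-(3 : ℝ) / 2) * K := hsum'
      have hneg : X ^ (-(3 : ℝ) / 2) = (X ^ ((3 : ℝ) / 2))⁻¹ := by
        rw [show (-(3 : ℝ) / 2) = -((3 : ℝ) / 2) by ring, Real.rpow_neg hBpos.le]
      rw [hneg] at hXeq
      field_simp at hXeq ⊢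
      linarith [hXeq]
    calc X ^ ((5 : ℝ) / 2) = X ^ ((1 : ℝ) + 3 / 2) := by norm_num
    _ = X ^ (1 : ℝ) * X ^ ((3 : ℝ) / 2) := Real.rpow_add hBpos _ _
    _ = X * X ^ ((3 : ℝ) / 2) := by rw [Real.rpow_one]
    _ = a * K := this
  have haK : a * K = a * r * (1 - r ^ (2 * Tth)) / (1 - r ^ 2) := by rw [hK]; ring
  rw [← haK, ← hmain, ← Real.rpow_mul hBpos.le]
  norm_num
end

section
/- Let N ≥ 1 and let S ⊆ {1,...,N} be a nonempty set of invited client types with maximum element j. Let S' = {1, 2, ..., j}. With cost J(S) = K·(τ_j/(T−T_th))^{1/5}·(Σ_{i∈S} q_i s_i²/τ_i)^{−1/5} + τ_j/(T−T_th) for positive constants K, T−T_th, q_i, s_i, τ_i, we have J(S') ≤ J(S), with equality iff S = S'. -/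
theorem stmt_8 (N : ℕ) (hN : 1 ≤ N) (S : Finset ℕ) (hS : S.Nonempty)
    (hSsub : S ⊆ Finset.Icc 1 N) (q s τ : ℕ → ℝ) (hq : ∀ i, 0 < q i) (hs : ∀ i, 0 < s i)
    (hτ : ∀ i, 0 < τ i) (K TmT : ℝ) (hK : 0 < K) (hT : 0 < TmT)
    (J : Finset ℕ → ℝ)
    (hJ : ∀ A : Finset ℕ, J A =
      K * (τ (S.max' hS) / TmT) ^ ((1 : ℝ) / 5) *
        (∑ i ∈ A, q i * (s i) ^ 2 / τ i) ^ (-(1 : ℝ) / 5) + τ (S.max' hS) / TmT) :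
    J (Finset.Icc 1 (S.max' hS)) ≤ J S ∧
      (J (Finset.Icc 1 (S.max' hS)) = J S ↔ S = Finset.Icc 1 (S.max' hS)) := by
  set j := S.max' hS with hj
  have hsub : S ⊆ Finset.Icc 1 j := by
    intro i hi
    have h1 := hSsub hi
    simp only [Finset.mem_Icc] at h1 ⊢
    exact ⟨h1.1, S.le_max' i hi⟩
  have hpos : ∀ i, 0 < q i * (s i) ^ 2 / τ i := fun i =>
    div_pos (mul_pos (hq i) (pow_pos (hs i) 2)) (hτ i)
  by_cases hcase : S = Finset.Icc 1 j
  · rw [hcase]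
    exact ⟨le_refl _, by simp⟩
  · have hssub : S ⊂ Finset.Icc 1 j := ⟨hsub, fun h => hcase (Finset.Subset.antisymm hsub h)⟩
    obtain ⟨x, hx1, hx2⟩ := Finset.exists_of_ssubset hssub
    have hsum : (∑ i ∈ S, q i * (s i) ^ 2 / τ i) < ∑ i ∈ Finset.Icc 1 j, q i * (s i) ^ 2 / τ i :=
      Finset.sum_lt_sum_of_subset hsub hx1 hx2 (hpos x) fun k _ _ => (hpos k).le
    have hsumpos : 0 < ∑ i ∈ S, q i * (s i) ^ 2 / τ i :=
      Finset.sum_pos (fun i _ => hpos i) hS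
    have hrpow : (∑ i ∈ Finset.Icc 1 j, q i * (s i) ^ 2 / τ i) ^ (-(1 : ℝ) / 5) <
        (∑ i ∈ S, q i * (s i) ^ 2 / τ i) ^ (-(1 : ℝ) / 5) :=
      Real.rpow_lt_rpow_of_neg hsumpos hsum (by norm_num)
    have hcoef : 0 < K * (τ j / TmT) ^ ((1 : ℝ) / 5) :=
      mul_pos hK (Real.rpow_pos_of_pos (div_pos (hτ j) hT) _)
    have hlt : J (Finset.Icc 1 j) < J S := by
      rw [hJ, hJ]
      have := mul_lt_mul_of_pos_left hrpow hcoef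
      linarith
    exact ⟨hlt.le, ⟨fun h => absurd h hlt.ne, fun h => absurd h hcase⟩⟩
end

section
/- Let f(x) = K·((1−r²)/(1−r^{2x}))^{1/5}·(τ/(T−x))^{1/5} + τ/(T−x) on the real interval [1, T−1], with constants K > 0, τ > 0, T > 2, 1/2 ≤ r < 1. If f'(1) ≥ 0 then f is minimized over [1, T−1] at x = 1. -/
/-!
On `(0, T)` the cost is `C · ((1 - b^x)(T - x))^(-1/5) + τ / (T - x)` with `b = r²`. The product
`(1 - b^x)(T - x)` of a nondecreasing and a nonincreasing nonnegative concave function is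
concave, and `y ↦ y^(-1/5)`, `y ↦ y⁻¹` are convex and nonincreasing on `(0, ∞)`, so the cost
is convex. A convex function lies above its tangent line at `1`, whose slope `f'(1)` is
nonnegative.
-/

open Set

section Convexity

variable {E : Type*} [AddCommGroup E] [Module ℝ E] {s : Set E} {t : Set ℝ} {f : E → ℝ}
  {g : ℝ → ℝ}

theorem ConvexOn.comp_concaveOn_of_mapsTo (hg : ConvexOn ℝ t g) (hf : ConcaveOn ℝ s f)
    (hg' : AntitoneOn g t) (hfst : MapsTo f s t) : ConvexOn ℝ s (g ∘ f) :=
  ⟨hf.1, fun _ hx _ hy _ _ ha hb hab =>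
    (hg' (hg.1 (hfst hx) (hfst hy) ha hb hab) (hfst (hf.1 hx hy ha hb hab))
      (hf.2 hx hy ha hb hab)).trans (hg.2 (hfst hx) (hfst hy) ha hb hab)⟩

theorem ConcaveOn.comp_of_mapsTo (hg : ConcaveOn ℝ t g) (hf : ConcaveOn ℝ s f)
    (hg' : MonotoneOn g t) (hfst : MapsTo f s t) : ConcaveOn ℝ s (g ∘ f) := by
  rw [← neg_convexOn_iff]
  exact hg.neg.comp_concaveOn_of_mapsTo hf hg'.neg hfst

theorem ConcaveOn.convexOn_inv (hf : ConcaveOn ℝ s f) (hf₀ : ∀ x ∈ s, 0 < f x) :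
    ConvexOn ℝ s fun x => (f x)⁻¹ := by
  have hinv : ConvexOn ℝ (Ioi 0) fun y : ℝ => y⁻¹ := by
    simpa using convexOn_zpow (𝕜 := ℝ) (-1)
  exact hinv.comp_concaveOn_of_mapsTo hf antitoneOn_inv_pos hf₀

theorem ConcaveOn.rpow {p : ℝ} (hf : ConcaveOn ℝ s f) (hf₀ : ∀ x ∈ s, 0 ≤ f x)
    (hp₀ : 0 ≤ p) (hp₁ : p ≤ 1) : ConcaveOn ℝ s fun x => f x ^ p :=
  (Real.concaveOn_rpow hp₀ hp₁).comp_of_mapsTo hf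
    (Real.monotoneOn_rpow_Ici_of_exponent_nonneg hp₀) hf₀

end Convexity

theorem ConvexOn.le_of_deriv_nonneg {S : Set ℝ} {f : ℝ → ℝ} {a b : ℝ}
    (hfc : ConvexOn ℝ S f) (ha : a ∈ S) (hb : b ∈ S) (hab : a ≤ b)
    (hfd : DifferentiableAt ℝ f a) (hd : 0 ≤ deriv f a) : f a ≤ f b := by
  rcases hab.eq_or_lt with rfl | hab
  · rfl
  have hslope := hd.trans (hfc.deriv_le_slope ha hb hab hfd)
  rw [slope_def_field, div_nonneg_iff] at hslope
  rcases hslope with ⟨h, -⟩ | ⟨-, h⟩ <;> linarith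

theorem concaveOn_one_sub_rpow_mul_sub {b T : ℝ} (hb₀ : 0 < b) (hb₁ : b ≤ 1) :
    ConcaveOn ℝ (Icc 0 T) fun x => (1 - b ^ x) * (T - x) := by
  have hu : ConcaveOn ℝ (Icc 0 T) fun x => 1 - b ^ x :=
    (concaveOn_const _ (convex_Icc 0 T)).sub
      ((convexOn_rpow_left hb₀).subset (subset_univ _) (convex_Icc 0 T))
  have hv : ConcaveOn ℝ (Icc 0 T) fun x => T - x :=
    (concaveOn_const _ (convex_Icc 0 T)).sub (convexOn_id (convex_Icc 0 T))
  refine hu.mul hv (fun x hx => ?_) (fun x hx => sub_nonneg.2 hx.2) ?_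
  · exact sub_nonneg.2 (Real.rpow_le_one hb₀.le hb₁ hx.1)
  · have hmono : Monotone fun x : ℝ => 1 - b ^ x := fun _ _ hxy =>
      sub_le_sub_left (Real.antitone_rpow_of_base_le_one hb₀ hb₁ hxy) 1
    have hanti : Antitone fun x : ℝ => T - x := fun _ _ hxy => sub_le_sub_left hxy T
    exact (hmono.antivary hanti).antivaryOn _

noncomputable def expectedCost (b T C τ q x : ℝ) : ℝ :=
  C * (((1 - b ^ x) * (T - x)) ^ q)⁻¹ + τ * (T - x)⁻¹

theorem convexOn_expectedCost {b T C τ q : ℝ} (hb₀ : 0 < b) (hb₁ : b < 1) (hC : 0 ≤ C)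
    (hτ : 0 ≤ τ) (hq₀ : 0 ≤ q) (hq₁ : q ≤ 1) :
    ConvexOn ℝ (Ioo 0 T) (expectedCost b T C τ q) := by
  have hp := (concaveOn_one_sub_rpow_mul_sub (T := T) hb₀ hb₁.le).subset Ioo_subset_Icc_self
    (convex_Ioo 0 T)
  have hp₀ : ∀ x ∈ Ioo 0 T, 0 < (1 - b ^ x) * (T - x) := fun x hx =>
    mul_pos (sub_pos.2 (Real.rpow_lt_one hb₀.le hb₁ hx.1)) (sub_pos.2 hx.2)
  have hv : ConcaveOn ℝ (Ioo 0 T) fun x => T - x :=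
    (concaveOn_const _ (convex_Ioo 0 T)).sub (convexOn_id (convex_Ioo 0 T))
  exact (((hp.rpow (fun x hx => (hp₀ x hx).le) hq₀ hq₁).convexOn_inv fun x hx =>
    Real.rpow_pos_of_pos (hp₀ x hx) q).smul hC).add
    ((hv.convexOn_inv fun x hx => sub_pos.2 hx.2).smul hτ)

theorem stmt_14 (K τ T r : ℝ) (hK : 0 < K) (hτ : 0 < τ) (hT : 2 < T) (hr0 : 1 / 2 ≤ r)
    (hr1 : r < 1) (f : ℝ → ℝ)
    (hf : ∀ x : ℝ, f x =
      K * ((1 - r ^ 2) / (1 - r ^ (2 * x))) ^ ((1 : ℝ) / 5) * (τ / (T - x)) ^ ((1 : ℝ) / 5) +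
        τ / (T - x))
    (hderiv : 0 ≤ deriv f 1) :
    ∀ x ∈ Set.Icc (1 : ℝ) (T - 1), f 1 ≤ f x := by
  have hr : 0 < r := by linarith
  have hr2 : 0 < 1 - r ^ 2 := by nlinarith
  have hEq : EqOn f
      (expectedCost (r ^ 2) T (K * ((1 - r ^ 2) * τ) ^ ((1 : ℝ) / 5)) τ ((1 : ℝ) / 5))
      (Ioo 0 T) := by
    intro x hx
    have hu : 0 < 1 - (r ^ 2) ^ x :=
      sub_pos.2 (Real.rpow_lt_one (by positivity) (by nlinarith) hx.1)
    have hv : 0 < T - x := sub_pos.2 hx.2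
    rw [hf, expectedCost, Real.rpow_mul hr.le, Real.rpow_two, Real.div_rpow hr2.le hu.le,
      Real.div_rpow hτ.le hv.le, Real.mul_rpow hr2.le hτ.le, Real.mul_rpow hu.le hv.le]
    field_simp
  have hconv : ConvexOn ℝ (Ioo 0 T) f :=
    (convexOn_expectedCost (by positivity) (by nlinarith) (by positivity) hτ.le (by norm_num)
      (by norm_num)).congr hEq.symm
  have hdiff : DifferentiableAt ℝ f 1 := by
    have hu : 1 - r ^ (2 * (1 : ℝ)) ≠ 0 := by
      rw [mul_one, Real.rpow_two]; nlinarith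
    have hA : (1 - r ^ 2) / (1 - r ^ (2 * (1 : ℝ))) ≠ 0 := div_ne_zero hr2.ne' hu
    have hv : T - 1 ≠ 0 := by linarith
    have hB : τ / (T - 1) ≠ 0 := div_ne_zero hτ.ne' hv
    have hr' : r ≠ 0 := hr.ne'
    rw [funext hf]
    fun_prop (disch := assumption)
  intro x hx
  exact hconv.le_of_deriv_nonneg ⟨one_pos, by linarith⟩
    ⟨by linarith [hx.1], by linarith [hx.2]⟩ hx.1 hdiff hderiv
end
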